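/- arXiv:2410.13796 — 2 statements merged into one kernel-verified Lean document; each statement's English description precedes it below -/
import Mathlib

section
/- Local Novelty Distance lower bound (Theorem 1, second part, finite version): with the same definitions, if S is obtained from some Q in the dataset D by perturbing every point of Q by at most ε, then ε ≥ LND(S; D)/2. Equivalently, to produce S from any Q ∈ D, some point of Q must be moved by at least half of LND(S; D). -/
attribute [local instance] Classical.propDecidable

/-- The nondecreasing list of distances from `p` to the points of `T \ {p}`. -/
noncomputable def sortedDists {X : Type*} [MetricSpace X] [DecidableEq X]
    (T : Finset X) (p : X) : List ℝ :=
  ((T.erase p).val.map (dist p)).sort (· ≤ ·)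

/-- The row of `p` in `PDD(T; k)`: the sorted vector of the `k` smallest distances from
`p` to the other points of `T`, viewed as a point of `ℝᵏ` with the `L∞` metric. -/
noncomputable def row {X : Type*} [MetricSpace X] [DecidableEq X]
    (k : ℕ) (T : Finset X) (p : X) : Fin k → ℝ :=
  fun i => (sortedDists T p)[(i : ℕ)]!

/-- The Earth Mover's Distance between the uniformly weighted distributions of
`PDD` rows of the finite sets `S` and `Q`, rows compared in the `L∞` metric on `ℝᵏ`. -/
noncomputable def PDDdist {X : Type*} [MetricSpace X] [DecidableEq X]
    (k : ℕ) (S Q : Finset X) : ℝ :=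
  sInf {s | ∃ f : X → X → ℝ, (∀ p q, 0 ≤ f p q) ∧
    (∀ p ∈ S, ∑ q ∈ Q, f p q = 1 / S.card) ∧
    (∀ q ∈ Q, ∑ p ∈ S, f p q = 1 / Q.card) ∧
    s = ∑ p ∈ S, ∑ q ∈ Q, f p q * dist (row k S p) (row k Q q)}

/-- Local Novelty Distance of `S` with respect to a finite dataset `D`. -/
noncomputable def LND {X : Type*} [MetricSpace X] [DecidableEq X]
    (k : ℕ) (S : Finset X) (D : Finset (Finset X)) : ℝ :=
  sInf {d | ∃ Q ∈ D, d = PDDdist k S Q}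

/-!
Matching every `q ∈ Q` with its image `f q ∈ S` changes each distance `dist q x` by at most
`2ε`, by the triangle inequality. Sorting is `1`-Lipschitz for the sup distance, so the rows
of `q` in `Q` and of `f q` in `S` are `2ε`-close, and the transport plan carried by the
bijection `f` witnesses `PDDdist k S Q ≤ 2ε`; hence `LND k S D ≤ 2ε`.
-/

namespace List

/-- A `δ`-matching between two sorted lists can be uncrossed into the index-wise one. -/
theorem forall₂_abs_sub_le_of_rel {δ : ℝ} :
    ∀ {l₁ l₂ : List ℝ}, l₁.Pairwise (· ≤ ·) → l₂.Pairwise (· ≤ ·) →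
      Multiset.Rel (fun x y => |x - y| ≤ δ) l₁ l₂ →
      Forall₂ (fun x y => |x - y| ≤ δ) l₁ l₂
  | [], l₂, _, _, hrel => by
    obtain rfl : l₂ = [] := by simpa using hrel
    exact .nil
  | a₀ :: l₁, l₂, hs₁, hs₂, hrel => by
    obtain ⟨b₁, bs, hab₁, hrel', hl₂⟩ :=
      Multiset.rel_cons_left.mp (by simpa using hrel : Multiset.Rel _ (a₀ ::ₘ (l₁ : Multiset ℝ)) l₂)
    obtain _ | ⟨b₀, l₂⟩ := l₂
    · simp at hl₂
    rw [← Multiset.cons_coe] at hl₂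
    rcases Multiset.cons_eq_cons.mp hl₂ with ⟨rfl, rfl⟩ | ⟨-, cs, hl₂', rfl⟩
    · exact .cons hab₁ (forall₂_abs_sub_le_of_rel hs₁.of_cons hs₂.of_cons hrel')
    obtain ⟨a₁, as, hab₀, hrel'', hl₁⟩ := Multiset.rel_cons_right.mp hrel'
    have ha : a₀ ≤ a₁ := (pairwise_cons.mp hs₁).1 a₁ (by simp [← Multiset.mem_coe, hl₁])
    have hb : b₀ ≤ b₁ := (pairwise_cons.mp hs₂).1 b₁ (by simp [← Multiset.mem_coe, hl₂'])
    rw [abs_le] at hab₀ hab₁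
    refine .cons (abs_le.mpr ⟨by linarith, by linarith⟩)
      (forall₂_abs_sub_le_of_rel hs₁.of_cons hs₂.of_cons ?_)
    rw [hl₁, hl₂']
    exact .cons (abs_le.mpr ⟨by linarith, by linarith⟩) hrel''

theorem abs_getElem!_sub_le_of_forall₂ {δ : ℝ} (hδ : 0 ≤ δ) {l₁ l₂ : List ℝ}
    (h : Forall₂ (fun x y => |x - y| ≤ δ) l₁ l₂) (i : ℕ) : |l₁[i]! - l₂[i]!| ≤ δ := by
  by_cases hi : i < l₁.length
  · have hi₂ : i < l₂.length := h.length_eq ▸ hi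
    rw [getElem!_pos l₁ i hi, getElem!_pos l₂ i hi₂]
    exact h.get hi hi₂
  · have hi₂ : ¬ i < l₂.length := h.length_eq ▸ hi
    simpa [getElem!_neg l₁ i hi, getElem!_neg l₂ i hi₂] using hδ

end List

section Perturbation

variable {X : Type*} [MetricSpace X] [DecidableEq X] {T : Finset X} {f : X → X} {ε : ℝ}

theorem forall₂_sortedDists_image (hf : Set.InjOn f T) (hmove : ∀ x ∈ T, dist x (f x) ≤ ε)
    {p : X} (hp : p ∈ T) :
    List.Forall₂ (fun x y => |x - y| ≤ 2 * ε)
      (sortedDists (T.image f) (f p)) (sortedDists T p) := by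
  have herase : ((T.image f).erase (f p)).val = (T.erase p).val.map f := by
    rw [Finset.erase_val, Finset.image_val_of_injOn hf, Finset.erase_val,
      Multiset.map_erase_of_mem f _ hp]
  have hrel : Multiset.Rel (fun x y => |x - y| ≤ 2 * ε)
      (((T.image f).erase (f p)).val.map (dist (f p))) ((T.erase p).val.map (dist p)) := by
    rw [herase, Multiset.map_map, Multiset.rel_map]
    refine Multiset.rel_refl_of_refl_on fun x hx => ?_
    have hx : x ∈ T := Finset.mem_of_mem_erase hx
    calc |dist (f p) (f x) - dist p x| ≤ dist (f p) p + dist (f x) x := dist_dist_dist_le _ _ _ _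
      _ ≤ 2 * ε := by linarith [dist_comm p (f p), dist_comm x (f x), hmove p hp, hmove x hx]
  refine List.forall₂_abs_sub_le_of_rel (Multiset.pairwise_sort _ _) (Multiset.pairwise_sort _ _) ?_
  rwa [sortedDists, sortedDists, Multiset.sort_eq, Multiset.sort_eq]

theorem dist_row_image_le (hf : Set.InjOn f T) (hmove : ∀ x ∈ T, dist x (f x) ≤ ε)
    (k : ℕ) {p : X} (hp : p ∈ T) : dist (row k (T.image f) (f p)) (row k T p) ≤ 2 * ε := by
  have hε : 0 ≤ 2 * ε := by linarith [hmove p hp, dist_nonneg (x := p) (y := f p)]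
  exact (dist_pi_le_iff hε).mpr fun i =>
    List.abs_getElem!_sub_le_of_forall₂ hε (forall₂_sortedDists_image hf hmove hp) i

end Perturbation

section TransportPlan

variable {X : Type*} [MetricSpace X] [DecidableEq X] (k : ℕ)

theorem PDDdist_le_of_plan {S Q : Finset X} (g : X → X → ℝ) (hg : ∀ p q, 0 ≤ g p q)
    (hS : ∀ p ∈ S, ∑ q ∈ Q, g p q = 1 / S.card) (hQ : ∀ q ∈ Q, ∑ p ∈ S, g p q = 1 / Q.card) :
    PDDdist k S Q ≤ ∑ p ∈ S, ∑ q ∈ Q, g p q * dist (row k S p) (row k Q q) := by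
  refine csInf_le ⟨0, ?_⟩ ⟨g, hg, hS, hQ, rfl⟩
  rintro _ ⟨g', hg', -, -, rfl⟩
  exact Finset.sum_nonneg fun p _ => Finset.sum_nonneg fun q _ =>
    mul_nonneg (hg' p q) dist_nonneg

theorem PDDdist_nonneg (S Q : Finset X) : 0 ≤ PDDdist k S Q := by
  refine Real.sInf_nonneg ?_
  rintro _ ⟨g, hg, -, -, rfl⟩
  exact Finset.sum_nonneg fun p _ => Finset.sum_nonneg fun q _ =>
    mul_nonneg (hg p q) dist_nonneg

theorem LND_le_PDDdist {S Q : Finset X} {D : Finset (Finset X)} (hQ : Q ∈ D) :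
    LND k S D ≤ PDDdist k S Q :=
  csInf_le ⟨0, by rintro _ ⟨Q', -, rfl⟩; exact PDDdist_nonneg k S Q'⟩ ⟨Q, hQ, rfl⟩

theorem PDDdist_image_le {Q : Finset X} {f : X → X} (hf : Set.InjOn f Q) :
    PDDdist k (Q.image f) Q ≤
      (∑ q ∈ Q, dist (row k (Q.image f) (f q)) (row k Q q)) / Q.card := by
  set g : X → X → ℝ := fun p q => if p = f q then 1 / Q.card else 0
  have hcard : (Q.image f).card = Q.card := Finset.card_image_of_injOn hf
  have hrows : ∀ p ∈ Q.image f, ∑ q ∈ Q, g p q = 1 / (Q.image f).card := by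
    rintro _ hp
    obtain ⟨q₀, hq₀, rfl⟩ := Finset.mem_image.mp hp
    have hg : ∀ q ∈ Q, g (f q₀) q = if q₀ = q then 1 / (Q.card : ℝ) else 0 := fun q hq => by
      simp only [g, hf.eq_iff hq₀ hq]
    rw [hcard, Finset.sum_congr rfl hg, Finset.sum_ite_eq, if_pos hq₀]
  have hcols : ∀ q ∈ Q, ∑ p ∈ Q.image f, g p q = 1 / Q.card := fun q hq => by
    simp only [g, Finset.sum_ite_eq', if_pos (Finset.mem_image_of_mem f hq)]
  calc PDDdist k (Q.image f) Q
      ≤ ∑ p ∈ Q.image f, ∑ q ∈ Q, g p q * dist (row k (Q.image f) p) (row k Q q) :=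
        PDDdist_le_of_plan k g (fun p q => by positivity) hrows hcols
    _ = ∑ q ∈ Q, 1 / Q.card * dist (row k (Q.image f) (f q)) (row k Q q) := by
        rw [Finset.sum_comm]
        refine Finset.sum_congr rfl fun q hq => ?_
        simp only [g, ite_mul, zero_mul, Finset.sum_ite_eq', if_pos (Finset.mem_image_of_mem f hq)]
    _ = (∑ q ∈ Q, dist (row k (Q.image f) (f q)) (row k Q q)) / Q.card := by
        rw [← Finset.mul_sum, one_div_mul_eq_div]

end TransportPlan

theorem LND_lower_bound_general {n : ℕ} (k : ℕ)
    (D : Finset (Finset (EuclideanSpace ℝ (Fin n))))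
    (Q : Finset (EuclideanSpace ℝ (Fin n))) (hQ : Q ∈ D)
    (S : Finset (EuclideanSpace ℝ (Fin n)))
    (f : EuclideanSpace ℝ (Fin n) → EuclideanSpace ℝ (Fin n))
    (hf : Set.InjOn f ↑Q) (hS : S = Q.image f)
    (ε : ℝ) (hε : 0 ≤ ε) (hmove : ∀ q ∈ Q, dist q (f q) ≤ ε) :
    LND k S D / 2 ≤ ε := by
  subst hS
  have hcost : ∑ q ∈ Q, dist (row k (Q.image f) (f q)) (row k Q q) ≤ 2 * ε * Q.card := by
    rw [mul_comm, ← nsmul_eq_mul]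
    exact Finset.sum_le_card_nsmul _ _ _ fun q hq => dist_row_image_le hf hmove k hq
  have hPDD : PDDdist k (Q.image f) Q ≤ 2 * ε :=
    (PDDdist_image_le k hf).trans (div_le_of_le_mul₀ (Nat.cast_nonneg _) (by positivity) hcost)
  linarith [LND_le_PDDdist k (S := Q.image f) hQ]

/-- Local Novelty Distance lower bound (finite version): if `S` is obtained from some
`Q` in the dataset `D` by perturbing every point by at most `ε`, where `ε` is smaller than
the packing radius of `Q` (half the minimum inter-point distance), then `ε ≥ LND(S; D)/2`,
i.e. some point of `Q` must be moved by at least half of `LND(S; D)`. -/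
theorem LND_lower_bound {n : ℕ} (m k : ℕ) (hm : k + 1 ≤ m)
    (D : Finset (Finset (EuclideanSpace ℝ (Fin n))))
    (hcard : ∀ T ∈ D, T.card = m)
    (Q : Finset (EuclideanSpace ℝ (Fin n))) (hQ : Q ∈ D)
    (S : Finset (EuclideanSpace ℝ (Fin n))) (hScard : S.card = m)
    (f : EuclideanSpace ℝ (Fin n) → EuclideanSpace ℝ (Fin n))
    (hf : Set.InjOn f ↑Q) (hS : S = Q.image f)
    (ε : ℝ) (hε : 0 ≤ ε) (hmove : ∀ q ∈ Q, dist q (f q) ≤ ε)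
    (hsep : ∀ q₁ ∈ Q, ∀ q₂ ∈ Q, q₁ ≠ q₂ → ε < dist q₁ q₂ / 2) :
    LND k S D / 2 ≤ ε :=
  LND_lower_bound_general k D Q hQ S f hf hS ε hε hmove
end

section
/- AMD perturbation stability (finite version): if S is obtained from a finite m-point set Q ⊂ ℝⁿ by perturbing every point by at most ε (via a bijection), then for every k ≤ m−1, |AMD_k(S) − AMD_k(Q)| ≤ 2ε, and hence L∞(AMD(S;k), AMD(Q;k)) ≤ 2ε for the vectors of the first k averaged minimum distances. -/
attribute [local instance] Classical.propDecidable

/-- `AMD` (Average Minimum Distance): the mean over `p ∈ T` of the `i`-th smallest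
distance from `p` to the other points of `T` (zero-based index `i`). -/
noncomputable def AMD {X : Type*} [MetricSpace X] [DecidableEq X]
    (T : Finset X) (i : ℕ) : ℝ :=
  (∑ p ∈ T, (sortedDists T p)[i]!) / T.card

/-!
The `i`-th smallest element of a multiset is at most `x` exactly when more than `i` of its
elements are at most `x`. If every element of a multiset moves by at most `δ`, each element
`≤ x` becomes one `≤ x + δ`, so the `i`-th smallest element moves by at most `δ`. Perturbing
the points by at most `ε` changes every pairwise distance by at most `2ε`; hence every sorted
distance list, and every average of them, changes by at most `2ε`.
-/

namespace List

variable {α : Type*} [LinearOrder α] {l : List α}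

theorem SortedLE.getElem_le_iff_lt_countP (hl : l.SortedLE) {i : ℕ} (hi : i < l.length)
    (x : α) : l[i] ≤ x ↔ i < l.countP (· ≤ x) := by
  constructor
  · intro hix
    have htake : ∀ a ∈ l.take (i + 1), a ≤ x := by
      intro a ha
      obtain ⟨j, hj, rfl⟩ := getElem_of_mem ha
      rw [getElem_take]
      exact (hl.getElem_le_getElem_of_le (by simp at hj; omega)).trans hix
    calc i < (l.take (i + 1)).countP (· ≤ x) := by
          rw [countP_eq_length.mpr (by simpa using htake), length_take]; omega
      _ ≤ l.countP (· ≤ x) := (take_sublist _ _).countP_le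
  · intro hcount
    by_contra! hxi
    have hdrop : (l.drop i).countP (· ≤ x) = 0 := by
      refine countP_eq_zero.mpr fun a ha => ?_
      obtain ⟨j, hj, rfl⟩ := getElem_of_mem ha
      rw [getElem_drop]
      simpa using hxi.trans_le (hl.getElem_le_getElem_of_le (by omega))
    have htake := (l.take i).countP_le_length (p := (· ≤ x))
    rw [← take_append_drop i l, countP_append, hdrop] at hcount
    rw [length_take] at htake
    omega

end List

namespace Multiset

variable {α ι : Type*}

theorem countP_mono_left {p q : α → Prop} [DecidablePred p] [DecidablePred q]
    {s : Multiset α} (h : ∀ a ∈ s, p a → q a) : s.countP p ≤ s.countP q := by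
  induction s using Quotient.inductionOn with
  | h l => simpa using List.countP_mono_left (by simpa using h)

theorem countP_sort [LinearOrder α] (s : Multiset α) (p : α → Prop) [DecidablePred p] :
    s.sort.countP p = s.countP p := by
  rw [← coe_countP, sort_eq]

theorem sort_map_getElem_le_add {s : Multiset ι} {g h : ι → ℝ} {δ : ℝ}
    (hgh : ∀ a ∈ s, h a ≤ g a + δ) {i : ℕ} (hi : i < card s) :
    (s.map h).sort[i]'(by simpa) ≤ (s.map g).sort[i]'(by simpa) + δ := by
  set x := (s.map g).sort[i]'(by simpa)
  have hcount : s.countP (fun a => g a ≤ x) ≤ s.countP (fun a => h a ≤ x + δ) :=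
    countP_mono_left fun a ha hga => (hgh a ha).trans (by linarith)
  have hg := ((pairwise_sort (s.map g) _).sortedLE.getElem_le_iff_lt_countP (by simpa) x).mp le_rfl
  refine ((pairwise_sort (s.map h) _).sortedLE.getElem_le_iff_lt_countP (by simpa) _).mpr ?_
  simp only [countP_sort, countP_map, ← countP_eq_card_filter] at hg ⊢
  exact hg.trans_le hcount

theorem abs_sort_map_getElem!_sub_le {s : Multiset ι} {g h : ι → ℝ} {δ : ℝ}
    (hgh : ∀ a ∈ s, |g a - h a| ≤ δ) {i : ℕ} (hi : i < card s) :
    |(s.map g).sort[i]! - (s.map h).sort[i]!| ≤ δ := by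
  rw [getElem!_pos _ i (by simpa), getElem!_pos _ i (by simpa), abs_sub_le_iff]
  constructor
  · linarith [sort_map_getElem_le_add (g := h) (h := g)
      (fun a ha => by linarith [abs_sub_le_iff.mp (hgh a ha)]) hi]
  · linarith [sort_map_getElem_le_add (g := g) (h := h)
      (fun a ha => by linarith [abs_sub_le_iff.mp (hgh a ha)]) hi]

end Multiset

section Image

variable {X Y : Type*} [DecidableEq X] [DecidableEq Y] {Q : Finset X} {f : X → Y}

theorem Finset.image_erase_of_injOn (hf : Set.InjOn f Q) {p : X} (hp : p ∈ Q) :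
    (Q.erase p).image f = (Q.image f).erase (f p) := by
  rw [erase_eq, erase_eq, image_sdiff_of_injOn hf (singleton_subset_iff.mpr hp), image_singleton]

theorem sortedDists_image [MetricSpace Y] (hf : Set.InjOn f Q) {p : X} (hp : p ∈ Q) :
    sortedDists (Q.image f) (f p) = ((Q.erase p).val.map fun q => dist (f p) (f q)).sort := by
  rw [sortedDists, ← Finset.image_erase_of_injOn hf hp,
    Finset.image_val_of_injOn (hf.mono (Finset.erase_subset p Q)), Multiset.map_map]
  rfl

theorem abs_AMD_image_sub_le [MetricSpace X] [MetricSpace Y] (hf : Set.InjOn f Q) {δ : ℝ}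
    (hδ : ∀ p ∈ Q, ∀ q ∈ Q, |dist (f p) (f q) - dist p q| ≤ δ) {i : ℕ} (hi : i + 1 < Q.card) :
    |AMD (Q.image f) i - AMD Q i| ≤ δ := by
  have hcard_pos : (0 : ℝ) < Q.card := by exact_mod_cast (Nat.zero_lt_succ i).trans hi
  have hpoint : ∀ p ∈ Q, |(sortedDists (Q.image f) (f p))[i]! - (sortedDists Q p)[i]!| ≤ δ := by
    intro p hp
    rw [sortedDists_image hf hp, sortedDists]
    refine Multiset.abs_sort_map_getElem!_sub_le
      (fun q hq => hδ p hp q (Finset.mem_of_mem_erase hq)) ?_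
    rw [← Finset.card_def, Finset.card_erase_of_mem hp]
    omega
  rw [AMD, AMD, Finset.card_image_of_injOn hf, Finset.sum_image hf, ← sub_div,
    ← Finset.sum_sub_distrib, abs_div, abs_of_pos hcard_pos, div_le_iff₀ hcard_pos]
  calc |∑ p ∈ Q, ((sortedDists (Q.image f) (f p))[i]! - (sortedDists Q p)[i]!)|
      ≤ ∑ p ∈ Q, |(sortedDists (Q.image f) (f p))[i]! - (sortedDists Q p)[i]!| :=
        Finset.abs_sum_le_sum_abs _ _
    _ ≤ ∑ _p ∈ Q, δ := Finset.sum_le_sum hpoint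
    _ = δ * Q.card := by rw [Finset.sum_const, nsmul_eq_mul, mul_comm]

end Image

theorem AMD_perturbation_stability_general {n : ℕ} (m : ℕ)
    (Q S : Finset (EuclideanSpace ℝ (Fin n))) (hQcard : Q.card = m)
    (f : EuclideanSpace ℝ (Fin n) → EuclideanSpace ℝ (Fin n))
    (hf : Set.InjOn f ↑Q) (hS : S = Q.image f)
    (ε : ℝ) (hmove : ∀ q ∈ Q, dist q (f q) ≤ ε) :
    (∀ i < m - 1, |AMD S i - AMD Q i| ≤ 2 * ε) ∧
    (∀ k : ℕ, 0 < k → k ≤ m - 1 →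
      dist (fun j : Fin k => AMD S (j : ℕ)) (fun j : Fin k => AMD Q (j : ℕ)) ≤ 2 * ε) := by
  subst hS
  have hdistortion : ∀ p ∈ Q, ∀ q ∈ Q, |dist (f p) (f q) - dist p q| ≤ 2 * ε := by
    intro p hp q hq
    rw [abs_sub_comm, ← Real.dist_eq]
    linarith [dist_dist_dist_le p q (f p) (f q), hmove p hp, hmove q hq]
  have hcoord : ∀ i < m - 1, |AMD (Q.image f) i - AMD Q i| ≤ 2 * ε := fun i hi =>
    abs_AMD_image_sub_le hf hdistortion (by omega)
  refine ⟨hcoord, fun k hk hkm => ?_⟩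
  have hε : 0 ≤ 2 * ε := (abs_nonneg _).trans (hcoord 0 (by omega))
  exact (dist_pi_le_iff hε).mpr fun j => hcoord j (by omega)

/-- AMD perturbation stability (finite version): if `S` is obtained from an `m`-point set
`Q ⊂ ℝⁿ` by perturbing every point by at most `ε` (via a bijection), then each of the first
`m - 1` averaged minimum distances changes by at most `2ε`; hence the `L∞` distance between
the corresponding `AMD` vectors of length `k ≤ m - 1` is at most `2ε`. -/
theorem AMD_perturbation_stability {n : ℕ} (m : ℕ)
    (Q S : Finset (EuclideanSpace ℝ (Fin n))) (hQcard : Q.card = m)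
    (f : EuclideanSpace ℝ (Fin n) → EuclideanSpace ℝ (Fin n))
    (hf : Set.InjOn f ↑Q) (hS : S = Q.image f)
    (ε : ℝ) (hε : 0 ≤ ε) (hmove : ∀ q ∈ Q, dist q (f q) ≤ ε) :
    (∀ i < m - 1, |AMD S i - AMD Q i| ≤ 2 * ε) ∧
    (∀ k : ℕ, 0 < k → k ≤ m - 1 →
      dist (fun j : Fin k => AMD S (j : ℕ)) (fun j : Fin k => AMD Q (j : ℕ)) ≤ 2 * ε) :=
  AMD_perturbation_stability_general m Q S hQcard f hf hS ε hmove
end
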